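/- Let I ⊆ R be a cointerval squarefree monomial ideal generated in degree d, and order its minimal generators lexicographically decreasing: G(I) = (m_1 >_lex m_2 >_lex ⋯ >_lex m_k). Then I has linear quotients with respect to this ordering: for every j, the colon ideal ⟨m_1,…,m_{j−1}⟩ : m_j is generated by a subset of the variables. -/

import Mathlib

open MvPolynomial

/-- The monomial ideal generated by a set of exponent vectors. -/
noncomputable def genIdeal (K : Type*) [Field K] {n : ℕ} (ms : Set (Fin n →₀ ℕ)) :
    Ideal (MvPolynomial (Fin n) K) :=
  Ideal.span ((fun u => MvPolynomial.monomial u (1 : K)) '' ms)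

/-- The colon ideal `⟨m_1, …, m_{j-1}⟩ : m_j`. -/
noncomputable def colonJ (K : Type*) [Field K] {n k : ℕ} (m : Fin k → (Fin n →₀ ℕ))
    (j : Fin k) : Ideal (MvPolynomial (Fin n) K) :=
  Submodule.colon (genIdeal K {u | ∃ i : Fin k, i < j ∧ u = m i})
    (Ideal.span {MvPolynomial.monomial (m j) (1 : K)})

/-- `I` has linear quotients w.r.t. the ordering `m_1,…,m_k` of its generators:
each colon ideal is generated by a subset of the variables. -/
def HasLinearQuotients (K : Type*) [Field K] {n k : ℕ}
    (m : Fin k → (Fin n →₀ ℕ)) : Prop :=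
  ∀ j : Fin k, ∃ S : Set (Fin n),
    colonJ K m j = Ideal.span ((fun s => (MvPolynomial.X s : MvPolynomial (Fin n) K)) '' S)

/-- `set(m_j) = {i : x_i ∈ ⟨m_1,…,m_{j-1}⟩ : m_j}`. -/
def mset (K : Type*) [Field K] {n k : ℕ} (m : Fin k → (Fin n →₀ ℕ)) (j : Fin k) :
    Set (Fin n) :=
  {t | (MvPolynomial.X t : MvPolynomial (Fin n) K) ∈ colonJ K m j}

/-- The `m i` are minimal monomial generators: none divides another. -/
def MinimalGens {n k : ℕ} (m : Fin k → (Fin n →₀ ℕ)) : Prop :=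
  ∀ i j : Fin k, m i ≤ m j → i = j

/-- `b` is the decomposition function: for a monomial `u ∈ I`, `b u` is the smallest
index `j` with `u ∈ ⟨m_1,…,m_j⟩`. -/
def IsDecompositionFunction (K : Type*) [Field K] {n k : ℕ}
    (m : Fin k → (Fin n →₀ ℕ)) (b : (Fin n →₀ ℕ) → Fin k) : Prop :=
  ∀ u : Fin n →₀ ℕ, MvPolynomial.monomial u (1 : K) ∈ genIdeal K (Set.range m) →
    (MvPolynomial.monomial u (1 : K) ∈ genIdeal K {v | ∃ i : Fin k, i ≤ b u ∧ v = m i}) ∧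
    (∀ j : Fin k,
      MvPolynomial.monomial u (1 : K) ∈ genIdeal K {v | ∃ i : Fin k, i ≤ j ∧ v = m i} →
      b u ≤ j)

/-- The decomposition function is regular: `set(b(x_t·m)) ⊆ set(m)` for every
generator `m` and every `t ∈ set(m)`. -/
def IsRegularDecomp (K : Type*) [Field K] {n k : ℕ}
    (m : Fin k → (Fin n →₀ ℕ)) (b : (Fin n →₀ ℕ) → Fin k) : Prop :=
  ∀ j : Fin k, ∀ t ∈ mset K m j,
    mset K m (b (m j + Finsupp.single t 1)) ⊆ mset K m j

/-- The exponent vector of the squarefree monomial `x_{f 0} ⋯ x_{f (d-1)}`. -/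
noncomputable def vecOfFin {n d : ℕ} (f : Fin d → Fin n) : Fin n →₀ ℕ :=
  ∑ l : Fin d, Finsupp.single (f l) 1

/-- The exchange property defining cointerval ideals: for every squarefree monomial
`x_{i_1}⋯x_{i_d} ∈ I` (`i_1 < … < i_d`), every `t ≤ d` and all `j_1 < … < j_t` with
`j_s ≤ i_s` and `{j_1,…,j_t} ∩ {i_{t+1},…,i_d} = ∅`, the monomial
`x_{j_1}⋯x_{j_t}·x_{i_{t+1}}⋯x_{i_d}` also lies in `I`. -/
def CointervalIdeal (K : Type*) [Field K] {n : ℕ} (d : ℕ)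
    (I : Ideal (MvPolynomial (Fin n) K)) : Prop :=
  ∀ f : Fin d → Fin n, StrictMono f →
    MvPolynomial.monomial (vecOfFin f) (1 : K) ∈ I →
    ∀ (t : ℕ) (ht : t ≤ d), ∀ g : Fin t → Fin n, StrictMono g →
      (∀ s : Fin t, g s ≤ f (Fin.castLE ht s)) →
      (∀ (s : Fin t) (l : Fin d), t ≤ (l : ℕ) → g s ≠ f l) →
      MvPolynomial.monomial
          ((∑ s : Fin t, Finsupp.single (g s) 1) +
            ∑ l ∈ Finset.univ.filter (fun l : Fin d => t ≤ (l : ℕ)),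
              Finsupp.single (f l) 1) (1 : K) ∈ I

/-- `u >_lex v` for exponent vectors: at the smallest index where they differ, `u` is
larger. -/
def lexGt {n : ℕ} (u v : Fin n →₀ ℕ) : Prop :=
  ∃ i : Fin n, (∀ j : Fin n, j < i → u j = v j) ∧ v i < u i

/-- The generators are listed in lexicographically decreasing order. -/
def LexDec {n k : ℕ} (m : Fin k → (Fin n →₀ ℕ)) : Prop :=
  ∀ a b : Fin k, a < b → lexGt (m a) (m b)

/-- `u` is the exponent vector of a squarefree monomial of degree `d`. -/
def SqFreeDeg {n : ℕ} (d : ℕ) (u : Fin n →₀ ℕ) : Prop :=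
  (∀ a : Fin n, u a ≤ 1) ∧ u.support.card = d

/-!
Only the case `t = d` of the cointerval exchange is needed: lowering the indices of a
squarefree monomial of `I` keeps it in `I`. If `i < j`, let `t` be the first index where
`m_i` and `m_j` differ, so `x_t ∣ m_i` and `x_t ∤ m_j`; comparing supports, `m_j` has a
variable `x_a` with `a > t`. Replacing the least such `x_a` by `x_t` gives a monomial of
`I` of degree `d`, hence a generator; it is lex-larger than `m_j`, so it comes earlier, and
it divides `x_t m_j`. Thus `x_t` lies in the colon ideal, and every monomial of the colon
ideal is divisible by such an `x_t`.
-/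

namespace Finsupp

variable {σ : Type*}

theorem eq_of_le_of_degree_le {u v : σ →₀ ℕ} (huv : u ≤ v) (hdeg : v.degree ≤ u.degree) :
    u = v := by
  obtain ⟨w, rfl⟩ := exists_add_of_le huv
  have hw : w.degree = 0 := by simp only [map_add] at hdeg; omega
  rw [(degree_eq_zero_iff w).1 hw, add_zero]

theorem exists_mem_support_gt_of_lt [LinearOrder σ] {u v : σ →₀ ℕ} {t : σ}
    (hbelow : ∀ b < t, u b = v b) (hvt : v t = 0) (hut : u t ≠ 0)
    (hcard : u.support.card ≤ v.support.card) : ∃ a ∈ v.support, t < a := by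
  by_contra! hle
  have hsub : v.support ⊂ u.support := by
    refine (Finset.ssubset_iff_of_subset fun b hb => ?_).2
      ⟨t, by simpa using hut, by simpa using hvt⟩
    have hbt : b < t := lt_of_le_of_ne (hle b hb) (by rintro rfl; simp [hvt] at hb)
    simpa [hbelow b hbt] using hb
  exact absurd (Finset.card_lt_card hsub) (not_lt.2 hcard)

end Finsupp

theorem SqFreeDeg.eq_one_of_mem_support {n d : ℕ} {u : Fin n →₀ ℕ} (hu : SqFreeDeg d u)
    {a : Fin n} (ha : a ∈ u.support) : u a = 1 :=
  le_antisymm (hu.1 a) (Nat.one_le_iff_ne_zero.2 (Finsupp.mem_support_iff.1 ha))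

theorem SqFreeDeg.degree_eq {n d : ℕ} {u : Fin n →₀ ℕ} (hu : SqFreeDeg d u) : u.degree = d := by
  rw [Finsupp.degree_apply, ← hu.2, Finset.card_eq_sum_ones]
  exact Finset.sum_congr rfl fun _ ha => hu.eq_one_of_mem_support ha

theorem SqFreeDeg.vecOfFin_orderEmbOfFin {n d : ℕ} {u : Fin n →₀ ℕ} (hu : SqFreeDeg d u) :
    vecOfFin (u.support.orderEmbOfFin hu.2) = u := by
  have hone : u = ∑ a ∈ u.support, Finsupp.single a 1 := by
    conv_lhs => rw [← Finsupp.sum_single u, Finsupp.sum]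
    exact Finset.sum_congr rfl fun a ha => by rw [hu.eq_one_of_mem_support ha]
  conv_rhs => rw [hone, ← Finset.map_orderEmbOfFin_univ u.support hu.2, Finset.sum_map]
  rfl

theorem vecOfFin_update_add {n d : ℕ} (f : Fin d → Fin n) (q : Fin d) (t : Fin n) :
    vecOfFin (Function.update f q t) + Finsupp.single (f q) 1 =
      vecOfFin f + Finsupp.single t 1 := by
  have hupd : (fun l => Finsupp.single (Function.update f q t l) 1) =
      Function.update (fun l => Finsupp.single (f l) 1) q (Finsupp.single t 1) :=
    funext (Function.apply_update (fun _ b => Finsupp.single b 1) f q t)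
  rw [vecOfFin, vecOfFin, hupd, Finset.sum_update_of_mem (Finset.mem_univ q),
    ← Finset.add_sum_erase _ _ (Finset.mem_univ q), Finset.sdiff_singleton_eq_erase]
  abel

theorem StrictMono.update {α β : Type*} [LinearOrder α] [Preorder β] [DecidableEq α] {f : α → β}
    (hf : StrictMono f) {q : α} {t : β} (hlt : ∀ l < q, f l < t) (hgt : ∀ l, q < l → t < f l) :
    StrictMono (Function.update f q t) := by
  intro l₁ l₂ h
  rcases eq_or_ne l₁ q with h₁ | h₁ <;> rcases eq_or_ne l₂ q with h₂ | h₂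
  · exact absurd h (by rw [h₁, h₂]; exact lt_irrefl q)
  · rw [h₁, Function.update_self, Function.update_of_ne h₂]; exact hgt l₂ (h₁ ▸ h)
  · rw [h₂, Function.update_self, Function.update_of_ne h₁]; exact hlt l₁ (h₂ ▸ h)
  · rw [Function.update_of_ne h₁, Function.update_of_ne h₂]; exact hf h

theorem lexGt_asymm {n : ℕ} {u v : Fin n →₀ ℕ} (huv : lexGt u v) (hvu : lexGt v u) : False := by
  obtain ⟨a, ha, hva⟩ := huv
  obtain ⟨b, hb, hub⟩ := hvu
  rcases lt_trichotomy a b with h | rfl | h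
  · exact absurd (hb a h) (by omega)
  · omega
  · exact absurd (ha b h) (by omega)

theorem LexDec.lt_of_lexGt {n k : ℕ} {m : Fin k → (Fin n →₀ ℕ)} (hlex : LexDec m) {i j : Fin k}
    (h : lexGt (m i) (m j)) : i < j := by
  rcases lt_trichotomy i j with hij | rfl | hji
  · exact hij
  · obtain ⟨a, -, ha⟩ := h
    exact absurd ha (lt_irrefl _)
  · exact (lexGt_asymm h (hlex j i hji)).elim

section Ideals

variable {K : Type*} [Field K] {n k : ℕ}

theorem monomial_mem_genIdeal_iff {ms : Set (Fin n →₀ ℕ)} {u : Fin n →₀ ℕ} :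
    monomial u (1 : K) ∈ genIdeal K ms ↔ ∃ v ∈ ms, v ≤ u := by
  simp [genIdeal, mem_ideal_span_monomial_image]

theorem mem_colonJ_iff (m : Fin k → (Fin n →₀ ℕ)) (j : Fin k) (f : MvPolynomial (Fin n) K) :
    f ∈ colonJ K m j ↔ f * monomial (m j) 1 ∈ genIdeal K {u | ∃ i < j, u = m i} :=
  Submodule.mem_colon_span_singleton

theorem mem_mset_iff (m : Fin k → (Fin n →₀ ℕ)) (j : Fin k) (t : Fin n) :
    t ∈ mset K m j ↔ ∃ i < j, m i ≤ m j + Finsupp.single t 1 := by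
  rw [mset, Set.mem_ofPred_eq, mem_colonJ_iff, X, monomial_mul, one_mul, add_comm,
    monomial_mem_genIdeal_iff]
  constructor
  · rintro ⟨_, ⟨i, hij, rfl⟩, hle⟩
    exact ⟨i, hij, hle⟩
  · rintro ⟨i, hij, hle⟩
    exact ⟨m i, ⟨i, hij, rfl⟩, hle⟩

theorem span_X_mset_le (m : Fin k → (Fin n →₀ ℕ)) (j : Fin k) :
    Ideal.span ((fun s => (X s : MvPolynomial (Fin n) K)) '' mset K m j) ≤ colonJ K m j :=
  Ideal.span_le.2 <| Set.image_subset_iff.2 fun _ ht => ht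

theorem colonJ_le_span_X {m : Fin k → (Fin n →₀ ℕ)} {j : Fin k} {S : Set (Fin n)}
    (hS : ∀ i < j, ∃ t ∈ S, m j t < m i t) :
    colonJ K m j ≤ Ideal.span ((fun s => (X s : MvPolynomial (Fin n) K)) '' S) := by
  intro f hf
  rw [mem_ideal_span_X_image]
  intro u hu
  have hsupp : u + m j ∈ (f * monomial (m j) (1 : K)).support := by
    rwa [mem_support_iff, coeff_mul_monomial, mul_one, ← mem_support_iff]
  obtain ⟨_, ⟨i, hij, rfl⟩, hle⟩ :=
    (mem_ideal_span_monomial_image.1 ((mem_colonJ_iff m j f).1 hf)) _ hsupp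
  obtain ⟨t, htS, ht⟩ := hS i hij
  have := hle t
  exact ⟨t, htS, by simp only [Finsupp.add_apply] at this; omega⟩

end Ideals

namespace CointervalIdeal

variable {K : Type*} [Field K] {n d : ℕ} {I : Ideal (MvPolynomial (Fin n) K)}

theorem monomial_vecOfFin_mem_of_le (hco : CointervalIdeal K d I) {f g : Fin d → Fin n}
    (hf : StrictMono f) (hfI : monomial (vecOfFin f) (1 : K) ∈ I) (hg : StrictMono g)
    (hgf : ∀ l, g l ≤ f l) : monomial (vecOfFin g) (1 : K) ∈ I := by
  have h := hco f hf hfI d le_rfl g hg (fun l => by simpa using hgf l)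
    (fun _ l hl => absurd l.isLt (not_lt.2 hl))
  have hempty : Finset.univ.filter (fun l : Fin d => d ≤ (l : ℕ)) = ∅ :=
    Finset.filter_false_of_mem fun l _ => not_le.2 l.isLt
  rwa [hempty, Finset.sum_empty, add_zero] at h

theorem exists_exchange (hco : CointervalIdeal K d I) {u : Fin n →₀ ℕ} (hu : SqFreeDeg d u)
    (huI : monomial u (1 : K) ∈ I) {t a : Fin n} (ht : u t = 0) (ha : u a ≠ 0) (hta : t < a)
    (hgap : ∀ b, t < b → b < a → u b = 0) :
    ∃ w, monomial w (1 : K) ∈ I ∧ w + Finsupp.single a 1 = u + Finsupp.single t 1 := by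
  set f := u.support.orderEmbOfFin hu.2
  have hfu : vecOfFin f = u := hu.vecOfFin_orderEmbOfFin
  have hfsupp : ∀ l, u (f l) ≠ 0 := fun l =>
    Finsupp.mem_support_iff.1 (u.support.orderEmbOfFin_mem hu.2 l)
  obtain ⟨q, hq⟩ : a ∈ Set.range f := by
    rw [Finset.range_orderEmbOfFin]; exact Finsupp.mem_support_iff.2 ha
  have hlt : ∀ l < q, f l < t := fun l hl => by
    have hla : f l < a := hq ▸ f.strictMono hl
    by_contra! htl
    rcases htl.eq_or_lt with htl | htl
    · exact hfsupp l (htl ▸ ht)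
    · exact hfsupp l (hgap _ htl hla)
  have hgt : ∀ l, q < l → t < f l := fun l hl => hta.trans (hq ▸ f.strictMono hl)
  have hgf : ∀ l, Function.update f q t l ≤ f l := fun l => by
    rcases eq_or_ne l q with rfl | hl
    · rw [Function.update_self, hq]; exact hta.le
    · rw [Function.update_of_ne hl]
  refine ⟨_, hco.monomial_vecOfFin_mem_of_le f.strictMono (hfu ▸ huI)
    (f.strictMono.update hlt hgt) hgf, ?_⟩
  rw [← hq, vecOfFin_update_add, hfu]

end CointervalIdeal

section LinearQuotients

variable {K : Type*} [Field K] {n k d : ℕ} {m : Fin k → (Fin n →₀ ℕ)}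

theorem mem_mset_of_exists_gt (hsf : ∀ j, SqFreeDeg d (m j)) (hlex : LexDec m)
    (hco : CointervalIdeal K d (genIdeal K (Set.range m))) {j : Fin k} {t : Fin n}
    (hjt : m j t = 0) (hex : ∃ a ∈ (m j).support, t < a) : t ∈ mset K m j := by
  set B := (m j).support.filter (t < ·)
  have hB : B.Nonempty := by simpa [B, Finset.filter_nonempty_iff] using hex
  set a := B.min' hB
  obtain ⟨haj, hta⟩ := Finset.mem_filter.1 (B.min'_mem hB)
  have hgap : ∀ b, t < b → b < a → m j b = 0 := fun b htb hb => by
    by_contra hbj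
    exact absurd (B.min'_le b (Finset.mem_filter.2 ⟨Finsupp.mem_support_iff.2 hbj, htb⟩))
      (not_le.2 hb)
  obtain ⟨w, hwI, hw⟩ := hco.exists_exchange (hsf j)
    (monomial_mem_genIdeal_iff.2 ⟨m j, ⟨j, rfl⟩, le_rfl⟩) hjt
    (Finsupp.mem_support_iff.1 haj) hta hgap
  obtain ⟨_, ⟨i, rfl⟩, hle⟩ := monomial_mem_genIdeal_iff.1 hwI
  have hwdeg : w.degree = d := by
    have := congrArg Finsupp.degree hw
    simp only [map_add, Finsupp.degree_single, (hsf j).degree_eq] at this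
    omega
  have hiw : m i = w := Finsupp.eq_of_le_of_degree_le hle (by rw [hwdeg, (hsf i).degree_eq])
  have hwj : lexGt w (m j) := by
    refine ⟨t, fun b hbt => ?_, ?_⟩
    · have := DFunLike.congr_fun hw b
      simpa only [Finsupp.add_apply, Finsupp.single_eq_of_ne' (hbt.trans hta).ne',
        Finsupp.single_eq_of_ne' hbt.ne', add_zero] using this
    · have := DFunLike.congr_fun hw t
      simp only [Finsupp.add_apply, Finsupp.single_eq_of_ne' hta.ne', Finsupp.single_eq_same,
        hjt] at this
      omega
  refine (mem_mset_iff m j t).2 ⟨i, hlex.lt_of_lexGt (hiw ▸ hwj), ?_⟩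
  rw [hiw, ← hw]
  exact le_self_add

theorem exists_mem_mset_lt (hsf : ∀ j, SqFreeDeg d (m j)) (hlex : LexDec m)
    (hco : CointervalIdeal K d (genIdeal K (Set.range m))) {i j : Fin k} (hij : i < j) :
    ∃ t ∈ mset K m j, m j t < m i t := by
  obtain ⟨t, hbelow, ht⟩ := hlex i j hij
  have hjt : m j t = 0 := by have := (hsf i).1 t; omega
  refine ⟨t, mem_mset_of_exists_gt hsf hlex hco hjt ?_, ht⟩
  exact Finsupp.exists_mem_support_gt_of_lt hbelow hjt (by omega)
    ((hsf i).2.trans (hsf j).2.symm).le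

end LinearQuotients

/-- a cointerval squarefree monomial ideal generated in degree `d`, with
minimal generators ordered lexicographically decreasing, has linear quotients with
respect to this ordering. -/
theorem stmt13 (K : Type*) [Field K] {n k d : ℕ} (m : Fin k → (Fin n →₀ ℕ))
    (hsf : ∀ j : Fin k, SqFreeDeg d (m j))
    (hlex : LexDec m)
    (hco : CointervalIdeal K d (genIdeal K (Set.range m))) :
    HasLinearQuotients K m := fun j =>
  ⟨mset K m j, le_antisymm (colonJ_le_span_X fun _ hij => exists_mem_mset_lt hsf hlex hco hij)
    (span_X_mset_le m j)⟩
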